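/- arXiv:2003.06001 — 7 statements merged into one kernel-verified Lean document; each statement's English description precedes it below -/
import Mathlib

section
/- Moment bound for the quadratic variation of a discrete Ito integral: let p ≥ 2 and let T > 0, N ∈ ℕ, τ = T/N, (Ω, 𝓕, ℙ) with discrete filtration (𝓕ⁿ)_{n=0}^N and real random variables ξ¹, …, ξᴺ satisfy the discrete increment assumption with parameter p and constant C₀. Let H be a separable real Hilbert space and let g⁰, …, g^{N−1}: Ω → H be random variables with g^{m−1} 𝓕^{m−1}-measurable and 𝔼[‖g^{m−1}‖_H^p] < ∞ for each m. Then there is a constant C_p > 0, depending only on p and C₀, such that for every 1 ≤ n ≤ N, 𝔼[(Σ_{m=1}^n ‖g^{m−1} ξᵐ‖_H²)^{p/2}] ≤ C_p (nτ)^{p/2 − 1} Σ_{m=1}^n τ 𝔼[‖g^{m−1}‖_H^p]. -/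
open MeasureTheory ProbabilityTheory Filter Finset

/-!
The bound is pathwise plus one independence step. By the power-mean inequality,
`(∑ₘ ‖ξᵐ gᵐ⁻¹‖²)^(p/2) ≤ n^(p/2-1) ∑ₘ |ξᵐ|^p ‖gᵐ⁻¹‖^p`; since `ξᵐ` is independent of
`𝓕ᵐ⁻¹` and `gᵐ⁻¹` is `𝓕ᵐ⁻¹`-measurable, each expectation factors as
`𝔼|ξᵐ|^p 𝔼‖gᵐ⁻¹‖^p ≤ C₀ τ^(p/2) 𝔼‖gᵐ⁻¹‖^p`, and `n^(p/2-1) τ^(p/2) = (nτ)^(p/2-1) τ`.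
So `C_p = C₀` works.
-/

lemma Real.sq_rpow_half {x : ℝ} (hx : 0 ≤ x) (p : ℝ) : (x ^ 2) ^ (p / 2) = x ^ p := by
  rw [← Real.rpow_natCast_mul hx]
  norm_num [mul_div_cancel₀]

lemma sum_norm_sq_rpow_le {ι E : Type*} [SeminormedAddCommGroup E] (s : Finset ι) (v : ι → E)
    {p : ℝ} (hp : 2 ≤ p) :
    (∑ i ∈ s, ‖v i‖ ^ 2) ^ (p / 2) ≤ (#s : ℝ) ^ (p / 2 - 1) * ∑ i ∈ s, ‖v i‖ ^ p := by
  have h := Real.rpow_sum_le_const_mul_sum_rpow s (fun i => ‖v i‖ ^ 2) (by linarith : 1 ≤ p / 2)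
  simpa only [abs_pow, abs_norm, Real.sq_rpow_half (norm_nonneg _)] using h

lemma norm_smul_rpow {E : Type*} [SeminormedAddCommGroup E] [NormedSpace ℝ E]
    (a : ℝ) (v : E) (p : ℝ) : ‖a • v‖ ^ p = |a| ^ p * ‖v‖ ^ p := by
  rw [norm_smul, Real.norm_eq_abs, Real.mul_rpow (abs_nonneg a) (norm_nonneg v)]

section Independence

variable {Ω β γ E : Type*} {m m0 : MeasurableSpace Ω} {P : Measure Ω}

lemma ProbabilityTheory.Indep.indepFun_of_measurable [MeasurableSpace β] [MeasurableSpace γ]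
    {X : Ω → β} {Y : Ω → γ} (h : Indep (MeasurableSpace.comap X inferInstance) m P)
    (hY : Measurable[m] Y) : IndepFun X Y P := by
  rw [IndepFun_iff_Indep]
  exact indep_of_indep_of_le_right h hY.comap_le

variable [NormedAddCommGroup E] {X : Ω → ℝ} {Y : Ω → E}

lemma ProbabilityTheory.Indep.indepFun_abs_rpow_norm_rpow
    (h : Indep (MeasurableSpace.comap X inferInstance) m P) (hY : StronglyMeasurable[m] Y)
    (p : ℝ) : IndepFun (fun ω => |X ω| ^ p) (fun ω => ‖Y ω‖ ^ p) P :=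
  (h.indepFun_of_measurable hY.norm.measurable).comp
    (measurable_id.abs.pow_const p) (measurable_id.pow_const p)

variable [NormedSpace ℝ E]

lemma ProbabilityTheory.Indep.integrable_norm_smul_rpow
    (h : Indep (MeasurableSpace.comap X inferInstance) m P) (hY : StronglyMeasurable[m] Y)
    {p : ℝ} (hXp : Integrable (fun ω => |X ω| ^ p) P) (hYp : Integrable (fun ω => ‖Y ω‖ ^ p) P) :
    Integrable (fun ω => ‖X ω • Y ω‖ ^ p) P := by
  simp_rw [norm_smul_rpow]
  exact (h.indepFun_abs_rpow_norm_rpow hY p).integrable_mul hXp hYp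

lemma ProbabilityTheory.Indep.integral_norm_smul_rpow
    (h : Indep (MeasurableSpace.comap X inferInstance) m P) (hY : StronglyMeasurable[m] Y)
    {p : ℝ} (hXp : Integrable (fun ω => |X ω| ^ p) P) (hYp : Integrable (fun ω => ‖Y ω‖ ^ p) P) :
    ∫ ω, ‖X ω • Y ω‖ ^ p ∂P = (∫ ω, |X ω| ^ p ∂P) * ∫ ω, ‖Y ω‖ ^ p ∂P := by
  simp_rw [norm_smul_rpow]
  exact (h.indepFun_abs_rpow_norm_rpow hY p).integral_fun_mul_eq_mul_integral
    hXp.aestronglyMeasurable hYp.aestronglyMeasurable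

end Independence

lemma MeasureTheory.MemLp.integrable_abs_rpow {Ω : Type*} {m0 : MeasurableSpace Ω}
    {P : Measure Ω} {X : Ω → ℝ} {p : ℝ} (hp : 0 < p) (hX : MemLp X (ENNReal.ofReal p) P) :
    Integrable (fun ω => |X ω| ^ p) P := by
  have h := hX.integrable_norm_rpow (by simpa using hp) ENNReal.ofReal_ne_top
  simpa only [ENNReal.toReal_ofReal hp.le, Real.norm_eq_abs] using h

/-- Moment bound for the quadratic variation of a discrete Ito integral. -/
theorem stmt_1 (p C₀ : ℝ) (hp : 2 ≤ p) (hC₀ : 0 < C₀) :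
    ∃ Cp : ℝ, 0 < Cp ∧
      ∀ (Ω : Type) [m0 : MeasurableSpace Ω] (P : Measure Ω), IsProbabilityMeasure P →
      ∀ (T : ℝ), 0 < T → ∀ (N : ℕ), 1 ≤ N → ∀ (τ : ℝ), τ = T / N →
      ∀ (ℱ : ℕ → MeasurableSpace Ω), (∀ n, ℱ n ≤ m0) → Monotone ℱ →
      ∀ (ξ : ℕ → Ω → ℝ),
        (∀ n, 1 ≤ n → n ≤ N → ∫ ω, ξ n ω ∂P = 0) →
        (∀ n, 1 ≤ n → n ≤ N → ∫ ω, (ξ n ω) ^ 2 ∂P = τ) →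
        (∀ n, 1 ≤ n → n ≤ N → MemLp (ξ n) (ENNReal.ofReal p) P) →
        (∀ n, 1 ≤ n → n ≤ N → ∫ ω, |ξ n ω| ^ p ∂P ≤ C₀ * τ ^ (p / 2)) →
        (∀ n, 1 ≤ n → n ≤ N → Measurable[ℱ n] (ξ n)) →
        (∀ n, 1 ≤ n → n ≤ N →
          Indep (MeasurableSpace.comap (ξ n) inferInstance) (ℱ (n - 1)) P) →
      ∀ (H : Type) [NormedAddCommGroup H] [InnerProductSpace ℝ H] [CompleteSpace H],
        TopologicalSpace.SeparableSpace H →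
      ∀ (g : ℕ → Ω → H),
        (∀ m, m ≤ N - 1 → StronglyMeasurable[ℱ m] (g m)) →
        (∀ m, m ≤ N - 1 → Integrable (fun ω => ‖g m ω‖ ^ p) P) →
      ∀ n, 1 ≤ n → n ≤ N →
        ∫ ω, (∑ m ∈ Finset.Icc 1 n, ‖ξ m ω • g (m - 1) ω‖ ^ 2) ^ (p / 2) ∂P
          ≤ Cp * ((n : ℝ) * τ) ^ (p / 2 - 1)
              * ∑ m ∈ Finset.Icc 1 n, τ * ∫ ω, ‖g (m - 1) ω‖ ^ p ∂P := by
  refine ⟨C₀, hC₀, ?_⟩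
  intro Ω m0 P _ T hT N _ τ hτ ℱ _ _ ξ _ _ hξLp hξp _ hindep H _ _ _ _ g hgm hgp n _ hnN
  have hτ0 : 0 ≤ τ := by rw [hτ]; positivity
  have hrange {m} (hm : m ∈ Icc 1 n) : 1 ≤ m ∧ m ≤ N ∧ m - 1 ≤ N - 1 := by
    simp only [mem_Icc] at hm; omega
  have hint m (hm : m ∈ Icc 1 n) : Integrable (fun ω => ‖ξ m ω • g (m - 1) ω‖ ^ p) P := by
    obtain ⟨h1, hN, hN'⟩ := hrange hm
    exact (hindep m h1 hN).integrable_norm_smul_rpow (hgm _ hN')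
      ((hξLp m h1 hN).integrable_abs_rpow (by linarith)) (hgp _ hN')
  have hterm m (hm : m ∈ Icc 1 n) :
      ∫ ω, ‖ξ m ω • g (m - 1) ω‖ ^ p ∂P ≤ C₀ * τ ^ (p / 2) * ∫ ω, ‖g (m - 1) ω‖ ^ p ∂P := by
    obtain ⟨h1, hN, hN'⟩ := hrange hm
    rw [(hindep m h1 hN).integral_norm_smul_rpow (hgm _ hN')
      ((hξLp m h1 hN).integrable_abs_rpow (by linarith)) (hgp _ hN')]
    gcongr
    exact hξp m h1 hN
  calc ∫ ω, (∑ m ∈ Icc 1 n, ‖ξ m ω • g (m - 1) ω‖ ^ 2) ^ (p / 2) ∂P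
      ≤ ∫ ω, (n : ℝ) ^ (p / 2 - 1) * ∑ m ∈ Icc 1 n, ‖ξ m ω • g (m - 1) ω‖ ^ p ∂P := by
        refine integral_mono_of_nonneg (.of_forall fun ω => by positivity)
          ((integrable_finsetSum _ hint).const_mul _) (.of_forall fun ω => ?_)
        simpa using sum_norm_sq_rpow_le (Icc 1 n) (fun m => ξ m ω • g (m - 1) ω) hp
    _ = (n : ℝ) ^ (p / 2 - 1) * ∑ m ∈ Icc 1 n, ∫ ω, ‖ξ m ω • g (m - 1) ω‖ ^ p ∂P := by
        rw [integral_const_mul, integral_finsetSum _ hint]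
    _ ≤ (n : ℝ) ^ (p / 2 - 1) * ∑ m ∈ Icc 1 n, C₀ * τ ^ (p / 2) * ∫ ω, ‖g (m - 1) ω‖ ^ p ∂P := by
        gcongr with m hm
        exact hterm m hm
    _ = C₀ * ((n : ℝ) * τ) ^ (p / 2 - 1) * ∑ m ∈ Icc 1 n, τ * ∫ ω, ‖g (m - 1) ω‖ ^ p ∂P := by
        have hτq : τ ^ (p / 2) = τ ^ (p / 2 - 1) * τ := by
          rw [← Real.rpow_add_one' hτ0 (by linarith), sub_add_cancel]
        simp only [mul_sum, Real.mul_rpow n.cast_nonneg hτ0, hτq]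
        exact sum_congr rfl fun m _ => by ring
end

section
/- Extended Portmanteau / mapping theorem, convergence of pushforwards: let X be a topological space admitting a countable family of continuous real-valued functions that separates points. Let (μ_k)_{k∈ℕ} be a tight sequence of Borel probability measures on X converging weakly to a Borel probability measure μ. Let ζ_k, ζ: X → ℝ be Borel measurable for every k, and set N = {x ∈ X : there exists a sequence x_k → x in X such that (ζ_k(x_k)) does not converge to ζ(x)}. If the outer measure of N under μ is zero, i.e. inf{μ(B) : N ⊆ B, B Borel} = 0, then the pushforward measures μ_k ∘ ζ_k⁻¹ converge weakly to μ ∘ ζ⁻¹ as Borel probability measures on ℝ. -/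
/-!
The separating family embeds `X` continuously and injectively into `ℕ → ℝ`. Hence compact subsets
of `X` are metrizable, and the portmanteau bound `limsup μₖ(C) ≤ μ(C)`, valid for closed subsets of
`ℕ → ℝ`, holds for compact `C ⊆ X`. Fix a closed `F ⊆ ℝ` and a compact `K` carrying all but `ε` of
every `μₖ`. The sets `Bₘ = closure (⋃_{k ≥ m} ζₖ⁻¹F ∩ K)` are compact, so
`limsup μₖ(ζₖ⁻¹F) ≤ μ(Bₘ) + ε`, and `μ(Bₘ) ↓ μ(⋂ₘ Bₘ)`. By metrizability of `K`, a point `x` of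
`⋂ₘ Bₘ` is the limit of a sequence `xₖ` with `ζₖ(xₖ) ∈ F` for infinitely many `k`; if the
`ζₖ` converge continuously at `x` (that is, `x ∉ N`), then `ζ(x) ∈ F`. Thus
`limsup μₖ(ζₖ⁻¹F) ≤ μ(ζ⁻¹F)` for every closed `F`, which is weak convergence of the pushforwards.
-/

open MeasureTheory Filter Topology Set

def ContinuouslyConvergesAt {X Z : Type*} [TopologicalSpace X] [TopologicalSpace Z]
    (ζk : ℕ → X → Z) (ζ : X → Z) (x : X) : Prop :=
  ∀ xs : ℕ → X, Tendsto xs atTop (𝓝 x) → Tendsto (fun k => ζk k (xs k)) atTop (𝓝 (ζ x))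

section Topology

variable {X : Type*} [TopologicalSpace X]

theorem tendsto_extend_of_strictMono {φ : ℕ → ℕ} (hφ : StrictMono φ) {y : ℕ → X} {x : X}
    (hy : Tendsto y atTop (𝓝 x)) :
    Tendsto (Function.extend φ y fun _ => x) atTop (𝓝 x) := by
  refine tendsto_atTop'.2 fun U hU => ?_
  obtain ⟨J, hJ⟩ := tendsto_atTop'.1 hy U hU
  refine ⟨φ J, fun k hk => ?_⟩
  by_cases hk' : ∃ j, φ j = k
  · obtain ⟨j, rfl⟩ := hk'
    rw [hφ.injective.extend_apply]
    exact hJ j (hφ.le_iff_le.1 hk)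
  · rw [Function.extend_apply' _ _ _ hk']
    exact mem_of_mem_nhds hU

theorem exists_seq_tendsto_frequently_mem {K : Set X} {x : X} [(𝓝[K] x).IsCountablyGenerated]
    {A : ℕ → Set X} (hAK : ∀ k, A k ⊆ K) (hx : ∀ m, x ∈ closure (⋃ k ≥ m, A k)) :
    ∃ xs : ℕ → X, Tendsto xs atTop (𝓝 x) ∧ ∃ᶠ k in atTop, xs k ∈ A k := by
  obtain ⟨U, hU⟩ := (𝓝[K] x).exists_antitone_basis
  have hfreq : ∀ j, ∃ᶠ k in atTop, (U j ∩ A k).Nonempty := by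
    refine fun j => frequently_atTop.2 fun m => ?_
    obtain ⟨V, hV, hVU⟩ := mem_nhdsWithin_iff_exists_mem_nhds_inter.1 (hU.mem j)
    obtain ⟨y, hyV, hyA⟩ := mem_closure_iff_nhds.1 (hx m) V hV
    obtain ⟨k, hk, hyk⟩ := mem_iUnion₂.1 hyA
    exact ⟨k, hk, y, hVU ⟨hyV, hAK k hyk⟩, hyk⟩
  obtain ⟨φ, hφ, hφU⟩ := extraction_forall_of_frequently hfreq
  choose y hyU hyA using hφU
  refine ⟨Function.extend φ y fun _ => x,
    tendsto_extend_of_strictMono hφ ((hU.tendsto hyU).mono_right nhdsWithin_le_nhds),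
    frequently_atTop.2 fun m => ⟨φ m, hφ.id_le m, ?_⟩⟩
  rw [hφ.injective.extend_apply]
  exact hyA m

theorem IsCompact.isCountablyGenerated_nhdsWithin {Y : Type*} [TopologicalSpace Y]
    [TopologicalSpace.MetrizableSpace Y] {f : X → Y} (hf : Continuous f)
    (hinj : Function.Injective f) {K : Set X} (hK : IsCompact K) {x : X} (hx : x ∈ K) :
    (𝓝[K] x).IsCountablyGenerated := by
  have := isCompact_iff_compactSpace.1 hK
  have : TopologicalSpace.MetrizableSpace K :=
    ((hf.comp continuous_subtype_val).isClosedEmbedding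
      (hinj.comp Subtype.val_injective)).isEmbedding.metrizableSpace
  rw [nhdsWithin_eq_map_subtype_coe hx]
  infer_instance

theorem mem_of_forall_mem_closure_preimage {Z : Type*} [TopologicalSpace Z]
    {ζk : ℕ → X → Z} {ζ : X → Z} {x : X} (hx : ContinuouslyConvergesAt ζk ζ x)
    {K : Set X} [(𝓝[K] x).IsCountablyGenerated] {F : Set Z} (hF : IsClosed F)
    (hxF : ∀ m, x ∈ closure (⋃ k ≥ m, ζk k ⁻¹' F ∩ K)) : ζ x ∈ F := by
  obtain ⟨xs, hxs, hfreq⟩ :=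
    exists_seq_tendsto_frequently_mem (fun k => inter_subset_right) hxF
  exact hF.mem_of_frequently_of_tendsto (hfreq.mono fun k hk => hk.1) (hx xs hxs)

end Topology

section Measure

variable {X : Type*} [TopologicalSpace X] [MeasurableSpace X] [OpensMeasurableSpace X]

theorem limsup_measure_le_of_isCompact {ι : Type*} {L : Filter ι} {Y : Type*}
    [TopologicalSpace Y] [MeasurableSpace Y] [BorelSpace Y] [T2Space Y] [HasOuterApproxClosed Y]
    {f : X → Y} (hf : Continuous f) (hinj : Function.Injective f)
    {μs : ι → ProbabilityMeasure X} {μ : ProbabilityMeasure X} (hμ : Tendsto μs L (𝓝 μ))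
    {K : Set X} (hK : IsCompact K) :
    limsup (fun i => (μs i : Measure X) K) L ≤ (μ : Measure X) K := by
  have hfK : IsClosed (f '' K) := (hK.image hf).isClosed
  have hmap (ν : Measure X) : ν.map f (f '' K) = ν K := by
    rw [Measure.map_apply hf.measurable hfK.measurableSet, hinj.preimage_image]
  simpa only [ProbabilityMeasure.toMeasure_map, hmap] using
    ProbabilityMeasure.limsup_measure_closed_le_of_tendsto
      (ProbabilityMeasure.tendsto_map_of_tendsto_of_continuous μs μ hμ hf) hfK

variable [T2Space X] {Z : Type*} [TopologicalSpace Z] {μk : ℕ → Measure X} {μ : Measure X}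
  [IsFiniteMeasure μ] {ζk : ℕ → X → Z} {ζ : X → Z}

theorem limsup_measure_preimage_le
    (hcpt : ∀ C : Set X, IsCompact C → limsup (fun k => μk k C) atTop ≤ μ C)
    (htight : ∀ ε, 0 < ε → ∃ K : Set X, IsCompact K ∧ ∀ k, μk k Kᶜ ≤ ε)
    (hcount : ∀ K : Set X, IsCompact K → ∀ x ∈ K, (𝓝[K] x).IsCountablyGenerated)
    (hζ : ∀ᵐ x ∂μ, ContinuouslyConvergesAt ζk ζ x) {F : Set Z} (hF : IsClosed F) :
    limsup (fun k => μk k (ζk k ⁻¹' F)) atTop ≤ μ (ζ ⁻¹' F) := by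
  refine ENNReal.le_of_forall_pos_le_add fun ε hε _ => ?_
  obtain ⟨K, hK, hKc⟩ := htight ε (by positivity)
  set B : ℕ → Set X := fun m => closure (⋃ k ≥ m, ζk k ⁻¹' F ∩ K)
  have hBK (m : ℕ) : B m ⊆ K :=
    closure_minimal (iUnion₂_subset fun k _ => inter_subset_right) hK.isClosed
  have hB_anti : Antitone B := fun m m' hm =>
    closure_mono (iUnion₂_mono' fun k hk => ⟨k, hm.trans hk, subset_rfl⟩)
  have hle_B (m : ℕ) : limsup (fun k => μk k (ζk k ⁻¹' F)) atTop ≤ μ (B m) + ε := by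
    calc limsup (fun k => μk k (ζk k ⁻¹' F)) atTop
        ≤ limsup (fun k => μk k (B m) + ε) atTop := by
          refine limsup_le_limsup (eventually_atTop.2 ⟨m, fun k hk => ?_⟩)
          calc μk k (ζk k ⁻¹' F)
              ≤ μk k (ζk k ⁻¹' F ∩ K) + μk k (ζk k ⁻¹' F \ K) := measure_le_inter_add_sdiff _ _ _
            _ ≤ μk k (B m) + ε := by
              gcongr
              · exact (subset_iUnion₂ (s := fun k (_ : k ≥ m) => ζk k ⁻¹' F ∩ K) k hk).trans
                  subset_closure
              · exact (measure_mono (sdiff_subset_compl _ _)).trans (hKc k)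
      _ = limsup (fun k => μk k (B m)) atTop + ε :=
          limsup_add_const _ _ _ (by isBoundedDefault) (by isBoundedDefault)
      _ ≤ μ (B m) + ε := by
          gcongr
          exact hcpt _ (hK.of_isClosed_subset isClosed_closure (hBK m))
  have hInter : μ (⋂ m, B m) ≤ μ (ζ ⁻¹' F) := by
    refine measure_mono_ae (hζ.mono fun x hx hxB => ?_)
    have := hcount K hK x (hBK 0 (mem_iInter.1 hxB 0))
    exact mem_of_forall_mem_closure_preimage hx hF (mem_iInter.1 hxB)
  calc limsup (fun k => μk k (ζk k ⁻¹' F)) atTop ≤ ⨅ m, (μ (B m) + ε) := le_iInf hle_B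
    _ = μ (⋂ m, B m) + ε := by
      rw [← ENNReal.iInf_add, hB_anti.measure_iInter
        (fun m => isClosed_closure.measurableSet.nullMeasurableSet) ⟨0, measure_ne_top μ _⟩]
    _ ≤ μ (ζ ⁻¹' F) + ε := by gcongr

end Measure

/-- Extended Portmanteau / mapping theorem: convergence of pushforwards. -/
theorem stmt_4 {X : Type*} [TopologicalSpace X] [MeasurableSpace X] [BorelSpace X]
    (h : ℕ → X → ℝ) (hcont : ∀ n, Continuous (h n))
    (hsep : ∀ x y : X, x ≠ y → ∃ n, h n x ≠ h n y)
    (μk : ℕ → Measure X) (μ : Measure X)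
    (hprobk : ∀ k, IsProbabilityMeasure (μk k)) (hprob : IsProbabilityMeasure μ)
    (htight : ∀ ε : ENNReal, 0 < ε → ∃ K : Set X, IsCompact K ∧ ∀ k, 1 - ε ≤ μk k K)
    (hconv : ∀ φ : BoundedContinuousFunction X ℝ,
      Tendsto (fun k => ∫ x, φ x ∂(μk k)) atTop (𝓝 (∫ x, φ x ∂μ)))
    (ζk : ℕ → X → ℝ) (ζ : X → ℝ)
    (hζk : ∀ k, Measurable (ζk k)) (hζ : Measurable ζ)
    (hN : μ {x : X | ∃ xs : ℕ → X, Tendsto xs atTop (𝓝 x) ∧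
        ¬ Tendsto (fun k => ζk k (xs k)) atTop (𝓝 (ζ x))} = 0) :
    ∀ φ : BoundedContinuousFunction ℝ ℝ,
      Tendsto (fun k => ∫ t, φ t ∂((μk k).map (ζk k))) atTop
        (𝓝 (∫ t, φ t ∂(μ.map ζ))) := by
  let f : X → ℕ → ℝ := fun x n => h n x
  have hf : Continuous f := continuous_pi hcont
  have hinj : Function.Injective f := fun x y hxy =>
    by_contra fun hne => (hsep x y hne).elim fun n hn => hn (congrFun hxy n)
  have : T2Space X := .of_injective_continuous hinj hf
  let μs : ℕ → ProbabilityMeasure X := fun k => ⟨μk k, hprobk k⟩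
  let μ₀ : ProbabilityMeasure X := ⟨μ, hprob⟩
  have hμs : Tendsto μs atTop (𝓝 μ₀) :=
    ProbabilityMeasure.tendsto_iff_forall_integral_tendsto.2 hconv
  have htight' (ε : ENNReal) (hε : 0 < ε) : ∃ K : Set X, IsCompact K ∧ ∀ k, μk k Kᶜ ≤ ε := by
    obtain ⟨K, hK, hKt⟩ := htight ε hε
    exact ⟨K, hK, fun k => (prob_compl_eq_one_sub hK.measurableSet).trans_le
      (tsub_le_iff_tsub_le.1 (hKt k))⟩
  have hζae : ∀ᵐ x ∂μ, ContinuouslyConvergesAt ζk ζ x := by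
    simpa [ae_iff, ContinuouslyConvergesAt] using hN
  refine ProbabilityMeasure.tendsto_iff_forall_integral_tendsto.1
    (tendsto_of_forall_isClosed_limsup_le' (μ := μ₀.map hζ.aemeasurable)
      (μs := fun k => (μs k).map (hζk k).aemeasurable) fun F hF => ?_)
  simp only [ProbabilityMeasure.toMeasure_map, Measure.map_apply (hζk _) hF.measurableSet,
    Measure.map_apply hζ hF.measurableSet]
  exact limsup_measure_preimage_le (fun K hK => limsup_measure_le_of_isCompact hf hinj hμs hK)
    htight' (fun K hK x hx => hK.isCountablyGenerated_nhdsWithin hf hinj hx) hζae hF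
end

section
/- Extended Portmanteau / mapping theorem, lower semicontinuity: let X be a topological space admitting a countable family of continuous real-valued functions that separates points, and let (μ_k) be a tight sequence of Borel probability measures on X converging weakly to a Borel probability measure μ. Let ζ: X → [0, ∞] be a function such that the sublevel set {x ∈ X : ζ(x) ≤ t} is sequentially closed for every t ≥ 0. Then ζ is measurable with respect to the μ-completion of the Borel σ-algebra and with respect to the μ_k-completion for every k, and ∫_X ζ dμ ≤ liminf_{k→∞} ∫_X ζ dμ_k. -/
/-!
The functions `h n` give a continuous injection `H : X → (ℕ → ℝ)` into a metrizable space. Pushing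
the measures forward along `H`, the portmanteau theorem yields `limsup μ_k C ≤ μ C` for compact
`C ⊆ X`, since `H '' C` is closed. Compact subsets of `X` are metrizable through `H`, so a
sequentially closed sublevel set `{ζ ≤ c}` meets each compact set in a compact set. Tightness gives
compacts `K n` whose complements have mass at most `1 / n` under every `μ_k` and under `μ`; hence
`ζ` is Borel off the common null set `(⋃ n, K n)ᶜ`, and, as `K n \ {c < ζ}` is compact,
`μ {c < ζ} ≤ liminf μ_k {c < ζ} + 1 / n`. The layer-cake formula and Fatou's lemma integrate this
over `c`.
-/

open MeasureTheory Filter Topology Set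
open scoped ENNReal NNReal

section LayerCake

variable {α : Type*} [MeasurableSpace α] {μ : Measure α} {μs : ℕ → Measure α}

theorem lintegral_eq_iSup_lintegral_min_natCast {f : α → ℝ≥0∞} (hf : AEMeasurable f μ) :
    ∫⁻ x, f x ∂μ = ⨆ m : ℕ, ∫⁻ x, min (f x) m ∂μ := by
  rw [← lintegral_iSup' (fun m => hf.min aemeasurable_const)
    (ae_of_all _ fun x m n hmn => min_le_min_left _ (Nat.cast_le.mpr hmn))]
  congr with x
  rw [← inf_iSup_eq, ENNReal.iSup_natCast, inf_top_eq]

theorem lintegral_ofReal_le_liminf_of_forall_measure_lt_le_liminf {g : α → ℝ} (hg_nn : 0 ≤ g)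
    (hg : AEMeasurable g μ) (hgs : ∀ i, AEMeasurable g (μs i))
    (h : ∀ t > 0, μ {x | t < g x} ≤ atTop.liminf fun i => μs i {x | t < g x}) :
    ∫⁻ x, ENNReal.ofReal (g x) ∂μ ≤ atTop.liminf fun i => ∫⁻ x, ENNReal.ofReal (g x) ∂(μs i) := by
  simp_rw [lintegral_eq_lintegral_meas_lt _ (ae_of_all _ hg_nn) hg,
    lintegral_eq_lintegral_meas_lt _ (ae_of_all _ hg_nn) (hgs _)]
  calc ∫⁻ t in Ioi 0, μ {x | t < g x}
      ≤ ∫⁻ t in Ioi 0, atTop.liminf fun i => μs i {x | t < g x} :=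
        setLIntegral_mono' measurableSet_Ioi h
    _ ≤ atTop.liminf fun i => ∫⁻ t in Ioi 0, μs i {x | t < g x} :=
        lintegral_liminf_le fun i => Antitone.measurable fun _ _ hst =>
          measure_mono fun _ hx => hst.trans_lt hx

theorem lintegral_le_liminf_of_forall_measure_lt_le_liminf {f : α → ℝ≥0∞}
    (hf : AEMeasurable f μ) (hfs : ∀ i, AEMeasurable f (μs i))
    (h : ∀ c : ℝ≥0, μ {x | c < f x} ≤ atTop.liminf fun i => μs i {x | c < f x}) :
    ∫⁻ x, f x ∂μ ≤ atTop.liminf fun i => ∫⁻ x, f x ∂(μs i) := by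
  rw [lintegral_eq_iSup_lintegral_min_natCast hf]
  refine iSup_le fun m => ?_
  have hm : ∀ x, min (f x) m ≠ ∞ := fun x => (min_lt_of_right_lt (ENNReal.natCast_lt_top m)).ne
  have htrunc : ∀ ν : Measure α,
      ∫⁻ x, min (f x) m ∂ν = ∫⁻ x, ENNReal.ofReal (min (f x) m).toReal ∂ν :=
    fun ν => lintegral_congr fun x => (ENNReal.ofReal_toReal (hm x)).symm
  simp only [htrunc]
  calc ∫⁻ x, ENNReal.ofReal (min (f x) m).toReal ∂μ
      ≤ atTop.liminf fun i => ∫⁻ x, ENNReal.ofReal (min (f x) m).toReal ∂(μs i) := by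
        refine lintegral_ofReal_le_liminf_of_forall_measure_lt_le_liminf
          (fun x => ENNReal.toReal_nonneg) (hf.min aemeasurable_const).ennreal_toReal
          (fun i => ((hfs i).min aemeasurable_const).ennreal_toReal) fun t ht => ?_
        have hset : {x | t < (min (f x) m).toReal} =
            {x | ENNReal.ofReal t < f x ∧ ENNReal.ofReal t < m} := by
          ext x
          simp only [mem_ofPred_eq, ← ENNReal.ofReal_lt_iff_lt_toReal ht.le (hm x), lt_min_iff]
        by_cases htm : ENNReal.ofReal t < m
        · simp only [hset, htm, and_true]
          exact h t.toNNReal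
        · simp [hset, htm]
    _ ≤ atTop.liminf fun i => ∫⁻ x, f x ∂(μs i) := by
        simp only [← htrunc]
        exact liminf_le_liminf (Eventually.of_forall fun i =>
          lintegral_mono fun x => min_le_left _ _)

end LayerCake

theorem MeasureTheory.ProbabilityMeasure.limsup_measure_le_of_tendsto_of_isCompact
    {ι X Y : Type*} [MeasurableSpace X] [TopologicalSpace X] [OpensMeasurableSpace X]
    [MeasurableSpace Y] [TopologicalSpace Y] [BorelSpace Y] [HasOuterApproxClosed Y] [T2Space Y]
    {H : X → Y} (hH : Continuous H) (hinj : Function.Injective H)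
    {L : Filter ι} {μ : ProbabilityMeasure X} {μs : ι → ProbabilityMeasure X}
    (hlim : Tendsto μs L (𝓝 μ)) {C : Set X} (hC : IsCompact C) :
    L.limsup (fun i => (μs i : Measure X) C) ≤ (μ : Measure X) C := by
  have hHC : IsClosed (H '' C) := (hC.image hH).isClosed
  have := limsup_measure_closed_le_of_tendsto (tendsto_map_of_tendsto_of_continuous _ _ hlim hH) hHC
  simpa only [map_apply' _ _ hHC.measurableSet, preimage_image_eq C hinj] using this

theorem measure_iInter_eq_zero_of_le_of_tendsto {α ι : Type*} [MeasurableSpace α]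
    {ρ : Measure α} {L : Filter ι} [L.NeBot] {s : ι → Set α} {ε : ι → ℝ≥0∞}
    (hε : Tendsto ε L (𝓝 0)) (hs : ∀ i, ρ (s i) ≤ ε i) : ρ (⋂ i, s i) = 0 :=
  nonpos_iff_eq_zero.mp <| ge_of_tendsto' hε fun i => (measure_mono (iInter_subset s i)).trans (hs i)

theorem IsSeqClosed.isCompact_inter_of_injective {X Y : Type*} [TopologicalSpace X]
    [TopologicalSpace Y] [T2Space Y] [TopologicalSpace.PseudoMetrizableSpace Y]
    {H : X → Y} (hH : Continuous H) (hinj : Function.Injective H) {S K : Set X}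
    (hS : IsSeqClosed S) (hK : IsCompact K) : IsCompact (S ∩ K) := by
  have : CompactSpace K := isCompact_iff_compactSpace.mp hK
  have : TopologicalSpace.PseudoMetrizableSpace K :=
    ((hH.comp continuous_subtype_val).isClosedEmbedding
      (hinj.comp Subtype.val_injective)).isInducing.pseudoMetrizableSpace
  have hSK : IsSeqClosed ((↑) ⁻¹' S : Set K) := fun _ _ hu hlim =>
    hS hu ((continuous_subtype_val.tendsto _).comp hlim)
  simpa only [Subtype.image_preimage_coe, inter_comm] using
    hSK.isClosed.isCompact.image continuous_subtype_val

theorem nullMeasurable_of_measurableSet_le_inter {α : Type*} [MeasurableSpace α]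
    {ρ : Measure α} {f : α → ℝ≥0∞} {K : ℕ → Set α} (hK : ρ (⋃ n, K n)ᶜ = 0)
    (hf : ∀ (c : ℝ≥0) n, MeasurableSet ({x | f x ≤ c} ∩ K n)) : NullMeasurable f ρ := by
  refine measurable_of_Iic (δ := NullMeasurableSpace α ρ) fun c => ?_
  induction c using ENNReal.recTopCoe with
  | top =>
    change NullMeasurableSet (f ⁻¹' Iic ∞) ρ
    simp only [Iic_top, preimage_univ, nullMeasurableSet_univ]
  | coe c =>
    change NullMeasurableSet (f ⁻¹' Iic (c : ℝ≥0∞)) ρ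
    have hsplit : f ⁻¹' Iic c = (⋃ n, {x | f x ≤ c} ∩ K n) ∪ ({x | f x ≤ c} \ ⋃ n, K n) := by
      rw [← inter_iUnion, inter_union_sdiff]
      rfl
    rw [hsplit]
    exact (MeasurableSet.iUnion (hf c)).nullMeasurableSet.union
      (NullMeasurableSet.of_null (measure_mono_null (sdiff_subset_compl _ _) hK))

theorem le_liminf_measure_of_isCompact_diff {X : Type*} [MeasurableSpace X]
    [TopologicalSpace X] [OpensMeasurableSpace X] [T2Space X] {μ : Measure X}
    {μs : ℕ → Measure X} [IsProbabilityMeasure μ] [∀ i, IsProbabilityMeasure (μs i)]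
    (hcpt : ∀ C, IsCompact C → atTop.limsup (fun i => μs i C) ≤ μ C)
    {K : ℕ → Set X} {ε : ℕ → ℝ≥0∞} (hε : Tendsto ε atTop (𝓝 0)) (hK : ∀ n i, μs i (K n)ᶜ ≤ ε n)
    {U : Set X} (hU : ∀ n, IsCompact (K n \ U)) :
    μ U ≤ atTop.liminf fun i => μs i U := by
  have hbound : ∀ n, μ U ≤ (atTop.liminf fun i => μs i U) + ε n := fun n => calc
    μ U ≤ μ (K n \ U)ᶜ := measure_mono fun x hxU hxKU => hxKU.2 hxU
    _ ≤ atTop.liminf fun i => μs i (K n \ U)ᶜ :=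
        le_measure_compl_liminf_of_limsup_measure_le (hU n).measurableSet (hcpt _ (hU n))
    _ ≤ atTop.liminf fun i => μs i U + ε n :=
        liminf_le_liminf (Eventually.of_forall fun i => calc
          μs i (K n \ U)ᶜ = μs i (U ∪ (K n)ᶜ) := by rw [Set.compl_sdiff]
          _ ≤ μs i U + ε n := (measure_union_le _ _).trans (add_le_add le_rfl (hK n i)))
    _ = (atTop.liminf fun i => μs i U) + ε n :=
        liminf_add_const _ _ _ (by isBoundedDefault) (by isBoundedDefault)
  have hlim : Tendsto (fun n => (atTop.liminf fun i => μs i U) + ε n) atTop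
      (𝓝 ((atTop.liminf fun i => μs i U) + 0)) := tendsto_const_nhds.add hε
  rw [add_zero] at hlim
  exact ge_of_tendsto' hlim hbound

/-- Extended Portmanteau / mapping theorem: lower semicontinuity. -/
theorem stmt_6 {X : Type*} [TopologicalSpace X] [MeasurableSpace X] [BorelSpace X]
    (h : ℕ → X → ℝ) (hcont : ∀ n, Continuous (h n))
    (hsep : ∀ x y : X, x ≠ y → ∃ n, h n x ≠ h n y)
    (μk : ℕ → Measure X) (μ : Measure X)
    (hprobk : ∀ k, IsProbabilityMeasure (μk k)) (hprob : IsProbabilityMeasure μ)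
    (htight : ∀ ε : ENNReal, 0 < ε → ∃ K : Set X, IsCompact K ∧ ∀ k, 1 - ε ≤ μk k K)
    (hconv : ∀ φ : BoundedContinuousFunction X ℝ,
      Tendsto (fun k => ∫ x, φ x ∂(μk k)) atTop (𝓝 (∫ x, φ x ∂μ)))
    (ζ : X → ENNReal)
    (hsub : ∀ t : NNReal, IsSeqClosed {x : X | ζ x ≤ (t : ENNReal)}) :
    NullMeasurable ζ μ ∧ (∀ k, NullMeasurable ζ (μk k)) ∧
      ∫⁻ x, ζ x ∂μ ≤ atTop.liminf (fun k => ∫⁻ x, ζ x ∂(μk k)) := by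
  let H : X → ℕ → ℝ := fun x n => h n x
  have hH : Continuous H := continuous_pi hcont
  have hHinj : Function.Injective H := fun x y hxy =>
    by_contra fun hne => (hsep x y hne).elim fun n hn => hn (congrFun hxy n)
  have : T2Space X := T2Space.of_injective_continuous hHinj hH
  have hcpt : ∀ C, IsCompact C → atTop.limsup (fun k => μk k C) ≤ μ C := fun C hC =>
    ProbabilityMeasure.limsup_measure_le_of_tendsto_of_isCompact (μ := ⟨μ, hprob⟩)
      (μs := fun k => ⟨μk k, hprobk k⟩) hH hHinj
      (ProbabilityMeasure.tendsto_iff_forall_integral_tendsto.mpr hconv) hC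
  choose K hK hKk using fun n : ℕ =>
    htight (n : ℝ≥0∞)⁻¹ (ENNReal.inv_pos.mpr (ENNReal.natCast_ne_top n))
  have hKk_compl : ∀ n k, μk k (K n)ᶜ ≤ (n : ℝ≥0∞)⁻¹ := fun n k => by
    rw [prob_compl_eq_one_sub (hK n).measurableSet]
    exact tsub_le_iff_tsub_le.mp (hKk n k)
  have hK_compl : ∀ n, μ (K n)ᶜ ≤ (n : ℝ≥0∞)⁻¹ := fun n =>
    (le_measure_compl_liminf_of_limsup_measure_le (hK n).measurableSet (hcpt _ (hK n))).trans
      (liminf_le_of_frequently_le' (Frequently.of_forall (hKk_compl n)))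
  have hζK : ∀ (c : ℝ≥0) n, IsCompact ({x | ζ x ≤ c} ∩ K n) := fun c n =>
    (hsub c).isCompact_inter_of_injective hH hHinj (hK n)
  have hnm : ∀ ρ : Measure X, (∀ n, ρ (K n)ᶜ ≤ (n : ℝ≥0∞)⁻¹) → NullMeasurable ζ ρ := fun ρ hρ =>
    nullMeasurable_of_measurableSet_le_inter (compl_iUnion K ▸
      measure_iInter_eq_zero_of_le_of_tendsto ENNReal.tendsto_inv_nat_nhds_zero hρ)
      fun c n => (hζK c n).measurableSet
  have hnmk : ∀ k, NullMeasurable ζ (μk k) := fun k => hnm (μk k) fun n => hKk_compl n k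
  refine ⟨hnm μ hK_compl, hnmk, lintegral_le_liminf_of_forall_measure_lt_le_liminf
    (hnm μ hK_compl).aemeasurable (fun k => (hnmk k).aemeasurable) fun c => ?_⟩
  refine le_liminf_measure_of_isCompact_diff hcpt ENNReal.tendsto_inv_nat_nhds_zero hKk_compl
    fun n => ?_
  convert hζK c n using 1
  ext x
  simp [and_comm]
end

section
/- Convex lower semicontinuity under convergence in law on the weak topology: let (Ω, 𝓕, ℙ) be a probability space, 𝒰 a separable reflexive real Banach space, and 𝒰_w the space 𝒰 endowed with its weak topology. Let ψ: 𝒰 → ℝ be norm-continuous, convex, and bounded below. Let (u_n) be Borel random variables with values in 𝒰 whose laws ℒ(u_n) form a tight sequence on 𝒰_w converging weakly on 𝒰_w to a Borel probability measure P̃. Then ψ is Borel measurable on 𝒰 and ∫_𝒰 ψ dP̃ ≤ liminf_{n→∞} 𝔼[ψ(u_n)] (where both sides may equal +∞). -/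
open MeasureTheory Filter Topology BoundedContinuousFunction

/-!
A lower semicontinuous convex function `f ≥ 0` on a separable space is the supremum of countably
many continuous affine minorants (Hahn–Banach). Clamped to `[0, m]`, these become bounded functions
that are continuous for the weak topology, and their finite maxima increase pointwise to `f`.
Convergence in law on `𝒰_w` gives `∫ h dP̃ = lim 𝔼[h(uₙ)] ≤ liminf 𝔼[f(uₙ)]` for each of them, and
monotone convergence passes to the limit `f = ψ - b`.
-/

namespace BoundedContinuousFunction

variable {X : Type*} [TopologicalSpace X]

def clamp (g : C(X, ℝ)) (m : ℕ) : X →ᵇ ℝ :=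
  mkOfBound ⟨fun x => max (min (g x) m) 0, by fun_prop⟩ m fun x y => by
    have hmem (t : ℝ) : max (min t m) 0 ∈ Set.Icc (0 : ℝ) m :=
      ⟨le_max_right _ _, max_le (min_le_right _ _) m.cast_nonneg⟩
    simpa using Real.dist_le_of_mem_Icc (hmem (g x)) (hmem (g y))

theorem clamp_apply (g : C(X, ℝ)) (m : ℕ) (x : X) : clamp g m x = max (min (g x) m) 0 := rfl

theorem clamp_nonneg (g : C(X, ℝ)) (m : ℕ) : 0 ≤ clamp g m := fun _ => le_max_right _ _

theorem partialSups_apply_le {φ : ℕ → X →ᵇ ℝ} {g : X → ℝ} (hle : ∀ k x, φ k x ≤ g x) (n : ℕ)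
    (x : X) : partialSups φ n x ≤ g x := by
  have hsup {a b : X →ᵇ ℝ} : (∀ x, (a ⊔ b) x ≤ g x) ↔ (∀ x, a x ≤ g x) ∧ ∀ x, b x ≤ g x := by
    simp only [coe_sup, Pi.sup_apply, sup_le_iff, forall_and]
  exact (partialSups_iff_forall (fun h : X →ᵇ ℝ => ∀ x, h x ≤ g x) hsup).2 (fun k _ => hle k) x

theorem tendsto_partialSups_apply {φ : ℕ → X →ᵇ ℝ} {g : X → ℝ} (hle : ∀ k x, φ k x ≤ g x)
    (hlt : ∀ x, ∀ a < g x, ∃ k, a < φ k x) (x : X) :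
    Tendsto (fun n => partialSups φ n x) atTop (𝓝 (g x)) := by
  refine tendsto_order.2 ⟨fun a ha => ?_, fun a ha =>
    Eventually.of_forall fun n => (partialSups_apply_le hle n x).trans_lt ha⟩
  obtain ⟨k, hk⟩ := hlt x a ha
  filter_upwards [eventually_ge_atTop k] with n hn
  exact hk.trans_le (le_partialSups_of_le φ hn x)

end BoundedContinuousFunction

section WeakSpace

variable {E : Type*} [AddCommGroup E] [Module ℝ E] [TopologicalSpace E]

theorem WeakSpace.continuous_clm_comp_symm (l : E →L[ℝ] ℝ) :
    Continuous fun x : WeakSpace ℝ E => l ((toWeakSpace ℝ E).symm x) :=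
  WeakBilin.eval_continuous (topDualPairing ℝ E).flip l

theorem ConvexOn.exists_seq_weakSpace_bcf_approx [IsTopologicalAddGroup E]
    [ContinuousSMul ℝ E] [LocallyConvexSpace ℝ E] [HereditarilyLindelofSpace E] {f : E → ℝ}
    (hfc : LowerSemicontinuous f) (hfcv : ConvexOn ℝ Set.univ f) (hf0 : 0 ≤ f) :
    ∃ φ : ℕ → WeakSpace ℝ E →ᵇ ℝ, (∀ k, 0 ≤ φ k) ∧
      (∀ k x, φ k (toWeakSpace ℝ E x) ≤ f x) ∧
      ∀ x, ∀ a < f x, ∃ k, a < φ k (toWeakSpace ℝ E x) := by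
  obtain ⟨l, c, hle, hsup⟩ := hfcv.real_univ_sSup_of_nat_affine_eq hfc
  have hle' (i : ℕ) (x : E) : l i x + c i ≤ f x := by simpa using hle i x
  let affine (i : ℕ) : C(WeakSpace ℝ E, ℝ) :=
    ⟨fun x => l i ((toWeakSpace ℝ E).symm x) + c i,
      (WeakSpace.continuous_clm_comp_symm (l i)).add continuous_const⟩
  refine ⟨fun k => clamp (affine k.unpair.1) k.unpair.2, fun k => clamp_nonneg _ _,
    fun k x => ?_, fun x a ha => ?_⟩
  · exact max_le ((min_le_left _ _).trans (hle' _ x)) (hf0 x)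
  · have hfx : f x = ⨆ i, (l i x + c i) := by
      simpa using (congrFun hsup x).symm
    obtain ⟨i, hi⟩ := exists_lt_of_lt_ciSup (hfx ▸ ha)
    refine ⟨Nat.pair i ⌈f x⌉₊, ?_⟩
    have hceil : l i x + c i ≤ ⌈f x⌉₊ := (hle' i x).trans (Nat.le_ceil _)
    simp only [Nat.unpair_pair, clamp_apply]
    exact hi.trans_le ((min_eq_left hceil).symm.le.trans (le_max_left _ _))

theorem ConvexOn.exists_monotone_weakSpace_bcf_tendsto [IsTopologicalAddGroup E]
    [ContinuousSMul ℝ E] [LocallyConvexSpace ℝ E] [HereditarilyLindelofSpace E] {f : E → ℝ}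
    (hfc : LowerSemicontinuous f) (hfcv : ConvexOn ℝ Set.univ f) (hf0 : 0 ≤ f) :
    ∃ Φ : ℕ → WeakSpace ℝ E →ᵇ ℝ, Monotone Φ ∧ (∀ n, 0 ≤ Φ n) ∧
      (∀ n x, Φ n (toWeakSpace ℝ E x) ≤ f x) ∧
      ∀ x, Tendsto (fun n => Φ n (toWeakSpace ℝ E x)) atTop (𝓝 (f x)) := by
  obtain ⟨φ, hφ0, hφle, hφlt⟩ := hfcv.exists_seq_weakSpace_bcf_approx hfc hf0
  let g (y : WeakSpace ℝ E) : ℝ := f ((toWeakSpace ℝ E).symm y)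
  have hφle' (k : ℕ) (y : WeakSpace ℝ E) : φ k y ≤ g y := hφle k _
  have hφlt' (y : WeakSpace ℝ E) (a : ℝ) (ha : a < g y) : ∃ k, a < φ k y := hφlt _ a ha
  exact ⟨partialSups φ, partialSups_monotone φ,
    fun n => (hφ0 0).trans (le_partialSups_of_le φ n.zero_le),
    fun n x => partialSups_apply_le hφle' n _,
    fun x => tendsto_partialSups_apply hφle' hφlt' _⟩

end WeakSpace

theorem lintegral_ofReal_le_liminf_of_tendsto_integral {X Ω : Type*} [TopologicalSpace X]
    [MeasurableSpace X] [OpensMeasurableSpace X] [MeasurableSpace Ω] {P : Measure Ω}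
    [IsFiniteMeasure P] {μ : Measure X} [IsFiniteMeasure μ] {v : ℕ → Ω → X}
    (hv : ∀ n, Measurable (v n)) {h : X →ᵇ ℝ} (h0 : 0 ≤ h)
    (hlim : Tendsto (fun n => ∫ ω, h (v n ω) ∂P) atTop (𝓝 (∫ x, h x ∂μ)))
    {g : X → ENNReal} (hg : ∀ x, ENNReal.ofReal (h x) ≤ g x) :
    ∫⁻ x, ENNReal.ofReal (h x) ∂μ ≤ atTop.liminf fun n => ∫⁻ ω, g (v n ω) ∂P := by
  have hstep (n : ℕ) : ENNReal.ofReal (∫ ω, h (v n ω) ∂P) ≤ ∫⁻ ω, g (v n ω) ∂P := by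
    have hint : Integrable (fun ω => h (v n ω)) P := (h.integrable _).comp_measurable (hv n)
    rw [ofReal_integral_eq_lintegral_ofReal hint (Eventually.of_forall fun ω => h0 _)]
    exact lintegral_mono fun ω => hg _
  rw [← ofReal_integral_eq_lintegral_ofReal (h.integrable μ) (Eventually.of_forall h0),
    ← ((ENNReal.continuous_ofReal.tendsto _).comp hlim).liminf_eq]
  exact liminf_le_liminf (Eventually.of_forall hstep)

theorem stmt_8_general {Ω : Type*} [m0 : MeasurableSpace Ω] (P : Measure Ω) [IsProbabilityMeasure P]
    {𝒰 : Type*} [NormedAddCommGroup 𝒰] [NormedSpace ℝ 𝒰]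
    [TopologicalSpace.SeparableSpace 𝒰] [MeasurableSpace 𝒰] [BorelSpace 𝒰]
    (ψ : 𝒰 → ℝ) (hψcont : Continuous ψ) (hψconv : ConvexOn ℝ Set.univ ψ)
    (u : ℕ → Ω → 𝒰) (hu : ∀ n, Measurable (u n))
    (Ptilde : Measure 𝒰) (hPt : IsProbabilityMeasure Ptilde)
    (hconv : ∀ φ : BoundedContinuousFunction (WeakSpace ℝ 𝒰) ℝ,
      Tendsto (fun n => ∫ ω, φ (toWeakSpace ℝ 𝒰 (u n ω)) ∂P) atTop
        (𝓝 (∫ x, φ (toWeakSpace ℝ 𝒰 x) ∂Ptilde))) :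
    Measurable ψ ∧
      ∀ b : ℝ, (∀ x, b ≤ ψ x) →
        ∫⁻ x, ENNReal.ofReal (ψ x - b) ∂Ptilde
          ≤ atTop.liminf fun n => ∫⁻ ω, ENNReal.ofReal (ψ (u n ω) - b) ∂P := by
  refine ⟨hψcont.measurable, fun b hb => ?_⟩
  obtain ⟨Φ, hΦmono, hΦ0, hΦle, hΦlim⟩ :=
    (hψconv.sub (concaveOn_const b convex_univ)).exists_monotone_weakSpace_bcf_tendsto
      (hψcont.sub continuous_const).lowerSemicontinuous fun x => sub_nonneg.2 (hb x)
  let Ψ (n : ℕ) : 𝒰 →ᵇ ℝ := (Φ n).compContinuous (toWeakSpaceCLM ℝ 𝒰 : C(𝒰, WeakSpace ℝ 𝒰))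
  have hΨ_le_liminf (n : ℕ) : ∫⁻ x, ENNReal.ofReal (Ψ n x) ∂Ptilde
      ≤ atTop.liminf fun n => ∫⁻ ω, ENNReal.ofReal (ψ (u n ω) - b) ∂P :=
    lintegral_ofReal_le_liminf_of_tendsto_integral (h := Ψ n) hu (fun x => hΦ0 n _) (hconv (Φ n))
      fun x => ENNReal.ofReal_le_ofReal (hΦle n x)
  refine le_of_tendsto' (lintegral_tendsto_of_tendsto_of_monotone
    (fun n => (Ψ n).continuous.measurable.ennreal_ofReal.aemeasurable)
    (Eventually.of_forall fun x m n hmn => ENNReal.ofReal_le_ofReal (hΦmono hmn _))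
    (Eventually.of_forall fun x => (ENNReal.continuous_ofReal.tendsto _).comp (hΦlim x)))
    hΨ_le_liminf

/-- Convex lower semicontinuity under convergence in law on the weak topology.
The inequality `∫ ψ dP̃ ≤ liminf 𝔼[ψ(uₙ)]`, in which both sides may be `+∞`, is
expressed via the Lebesgue integrals of `ψ - b` for any lower bound `b` of `ψ`. -/
theorem stmt_8 {Ω : Type*} [m0 : MeasurableSpace Ω] (P : Measure Ω) [IsProbabilityMeasure P]
    {𝒰 : Type*} [NormedAddCommGroup 𝒰] [NormedSpace ℝ 𝒰] [CompleteSpace 𝒰]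
    [TopologicalSpace.SeparableSpace 𝒰] [MeasurableSpace 𝒰] [BorelSpace 𝒰]
    (hrefl : Function.Surjective (NormedSpace.inclusionInDoubleDual ℝ 𝒰))
    (ψ : 𝒰 → ℝ) (hψcont : Continuous ψ) (hψconv : ConvexOn ℝ Set.univ ψ)
    (hψbdd : ∃ b : ℝ, ∀ x, b ≤ ψ x)
    (u : ℕ → Ω → 𝒰) (hu : ∀ n, Measurable (u n))
    (Ptilde : Measure 𝒰) (hPt : IsProbabilityMeasure Ptilde)
    (htight : ∀ ε : ENNReal, 0 < ε → ∃ K : Set 𝒰,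
      IsCompact (⇑(toWeakSpace ℝ 𝒰) '' K) ∧ ∀ n, 1 - ε ≤ P.map (u n) K)
    (hconv : ∀ φ : BoundedContinuousFunction (WeakSpace ℝ 𝒰) ℝ,
      Tendsto (fun n => ∫ ω, φ (toWeakSpace ℝ 𝒰 (u n ω)) ∂P) atTop
        (𝓝 (∫ x, φ (toWeakSpace ℝ 𝒰 x) ∂Ptilde))) :
    Measurable ψ ∧
      ∀ b : ℝ, (∀ x, b ≤ ψ x) →
        ∫⁻ x, ENNReal.ofReal (ψ x - b) ∂Ptilde
          ≤ atTop.liminf fun n => ∫⁻ ω, ENNReal.ofReal (ψ (u n ω) - b) ∂P :=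
  stmt_8_general (m0 := m0) P ψ hψcont hψconv u hu Ptilde hPt hconv
end

section
/- Sequentially continuous maps preserve tightness: let X be a topological space in which every compact subset (with the subspace topology) is metrizable, let Y be a topological space, and let γ: X → Y be Borel measurable and sequentially continuous (x_n → x implies γ(x_n) → γ(x)). If (μ_k) is a tight sequence of Borel probability measures on X, then the pushforward measures (μ_k ∘ γ⁻¹) form a tight sequence of Borel probability measures on Y. -/
open MeasureTheory

theorem IsCompact.image_of_seqContinuous {X Y : Type*} [TopologicalSpace X] [TopologicalSpace Y]
    {K : Set X} [TopologicalSpace.MetrizableSpace K] (hK : IsCompact K) {f : X → Y}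
    (hf : SeqContinuous f) : IsCompact (f '' K) := by
  have hrestrict : SeqContinuous (K.domRestrict f) := fun _ _ hu =>
    hf (continuous_subtype_val.seqContinuous hu)
  have : CompactSpace K := isCompact_iff_compactSpace.mp hK
  rw [Set.image_eq_range]
  exact isCompact_range hrestrict.continuous

theorem stmt_9_general {X Y : Type*} [TopologicalSpace X] [MeasurableSpace X]
    [TopologicalSpace Y] [MeasurableSpace Y]
    (hmetr : ∀ K : Set X, IsCompact K → TopologicalSpace.MetrizableSpace K)
    (γ : X → Y) (hγmeas : Measurable γ) (hγseq : SeqContinuous γ)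
    (μ : ℕ → Measure X)
    (htight : ∀ ε : ENNReal, 0 < ε → ∃ K : Set X, IsCompact K ∧ ∀ k, 1 - ε ≤ μ k K) :
    ∀ ε : ENNReal, 0 < ε → ∃ K : Set Y, IsCompact K ∧ ∀ k, 1 - ε ≤ (μ k).map γ K := by
  intro ε hε
  obtain ⟨K, hK, hKμ⟩ := htight ε hε
  have := hmetr K hK
  exact ⟨γ '' K, hK.image_of_seqContinuous hγseq,
    fun k => (hKμ k).trans (Measure.le_map_apply_image hγmeas.aemeasurable K)⟩

/-- Sequentially continuous maps preserve tightness. -/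
theorem stmt_9 {X Y : Type*} [TopologicalSpace X] [MeasurableSpace X] [BorelSpace X]
    [TopologicalSpace Y] [MeasurableSpace Y] [BorelSpace Y]
    (hmetr : ∀ K : Set X, IsCompact K → TopologicalSpace.MetrizableSpace K)
    (γ : X → Y) (hγmeas : Measurable γ) (hγseq : SeqContinuous γ)
    (μ : ℕ → Measure X) (hprob : ∀ k, IsProbabilityMeasure (μ k))
    (htight : ∀ ε : ENNReal, 0 < ε → ∃ K : Set X, IsCompact K ∧ ∀ k, 1 - ε ≤ μ k K) :
    ∀ ε : ENNReal, 0 < ε → ∃ K : Set Y, IsCompact K ∧ ∀ k, 1 - ε ≤ (μ k).map γ K :=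
  stmt_9_general hmetr γ hγmeas hγseq μ htight
end

section
/- Measurable selection of zeros of Carathéodory maps: let (Ω, 𝓕) be a measurable space, M ∈ ℕ, and let ψ: Ω × ℝ^M → ℝ^M be a map such that (i) for every u ∈ ℝ^M the map ω ↦ ψ(ω, u) is 𝓕-measurable, (ii) for every ω ∈ Ω the map u ↦ ψ(ω, u) is continuous, and (iii) for every ω ∈ Ω there exists u ∈ ℝ^M with ψ(ω, u) = 0. Then there exists an 𝓕-measurable map u: Ω → ℝ^M such that ψ(ω, u(ω)) = 0 holds for every ω ∈ Ω. -/
/-!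
The zero sets `F ω = (ψ ω)⁻¹' {0}` are nonempty and closed, and the set
`{ω | F ω ∩ ball x r ≠ ∅}` is measurable: as closed balls are compact, `F ω` meets
`ball x r` iff for some rational `s < r` the values of `ψ ω` at the points of a dense
sequence `e` lying in `closedBall x s` come arbitrarily close to `0`, a countable condition.

For such a family the Kuratowski–Ryll-Nardzewski construction gives a measurable selection:
choose recursively the least index `n k` such that `ball (e (n k)) (2⁻¹ ^ k)` meets `F ω` and
`e (n k)` lies within the sum of the radii at levels `k - 1` and `k` of `e (n (k - 1))`.
Least indices of measurable conditions depend measurably on `ω`, the centers `e (n k)` form a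
Cauchy sequence, and their limit lies in the closed set `F ω`.
-/

open Filter Topology Metric TopologicalSpace

namespace MeasurableSelection

variable {Ω X : Type*} [MetricSpace X] {F : Ω → Set X} {e : ℕ → X}

lemma exists_nonempty_inter_ball (he : DenseRange e) {S : Set X} (hS : S.Nonempty) {r : ℝ}
    (hr : 0 < r) : ∃ n, (S ∩ ball (e n) r).Nonempty := by
  obtain ⟨x, hx⟩ := hS
  obtain ⟨n, hn⟩ := denseRange_iff.1 he x r hr
  exact ⟨n, x, hx, hn⟩

lemma exists_nonempty_inter_ball_dist_lt (he : DenseRange e) {S : Set X} {x : X} {r s : ℝ}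
    (hS : (S ∩ ball x r).Nonempty) (hs : 0 < s) :
    ∃ n, (S ∩ ball (e n) s).Nonempty ∧ dist (e n) x < r + s := by
  obtain ⟨z, hzS, hzx⟩ := hS
  obtain ⟨n, hn⟩ := denseRange_iff.1 he z s hs
  refine ⟨n, ⟨z, hzS, hn⟩, ?_⟩
  calc dist (e n) x ≤ dist (e n) z + dist z x := dist_triangle _ _ _
    _ < s + r := add_lt_add (by rwa [dist_comm]) hzx
    _ = r + s := add_comm s r

/-- Stated as an implication so that an admissible `n` exists for every `m`, which lets
`Nat.find` choose it without a case split on `ω`. -/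
def IsNextCenter (F : Ω → Set X) (e : ℕ → X) (ω : Ω) (k m n : ℕ) : Prop :=
  (F ω ∩ ball (e m) (2⁻¹ ^ k)).Nonempty →
    (F ω ∩ ball (e n) (2⁻¹ ^ (k + 1))).Nonempty ∧
      dist (e n) (e m) < 2⁻¹ ^ k + 2⁻¹ ^ (k + 1)

lemma exists_isNextCenter (he : DenseRange e) (ω : Ω) (k m : ℕ) :
    ∃ n, IsNextCenter F e ω k m n := by
  by_cases hm : (F ω ∩ ball (e m) (2⁻¹ ^ k)).Nonempty
  · obtain ⟨n, hn⟩ :=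
      exists_nonempty_inter_ball_dist_lt he hm (s := 2⁻¹ ^ (k + 1)) (by positivity)
    exact ⟨n, fun _ => hn⟩
  · exact ⟨0, fun h => absurd h hm⟩

open Classical in
noncomputable def center (hF : ∀ ω, (F ω).Nonempty) (he : DenseRange e) (ω : Ω) : ℕ → ℕ
  | 0 => Nat.find (exists_nonempty_inter_ball he (hF ω) (r := 2⁻¹ ^ 0) (by positivity))
  | k + 1 => Nat.find (exists_isNextCenter (F := F) he ω k (center hF he ω k))

variable (hF : ∀ ω, (F ω).Nonempty) (he : DenseRange e)

lemma isNextCenter_center (ω : Ω) (k : ℕ) :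
    IsNextCenter F e ω k (center hF he ω k) (center hF he ω (k + 1)) := by
  classical
  exact Nat.find_spec (exists_isNextCenter he ω k (center hF he ω k))

lemma nonempty_inter_ball_center (ω : Ω) (k : ℕ) :
    (F ω ∩ ball (e (center hF he ω k)) (2⁻¹ ^ k)).Nonempty := by
  classical
  induction k with
  | zero =>
    exact Nat.find_spec (exists_nonempty_inter_ball he (hF ω) (r := 2⁻¹ ^ 0) (by positivity))
  | succ k ih => exact (isNextCenter_center hF he ω k ih).1

lemma cauchySeq_center (ω : Ω) : CauchySeq fun k => e (center hF he ω k) := by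
  refine cauchySeq_of_le_geometric 2⁻¹ (3 / 2) (by norm_num) fun k => ?_
  calc dist (e (center hF he ω k)) (e (center hF he ω (k + 1)))
      ≤ 2⁻¹ ^ k + 2⁻¹ ^ (k + 1) := by
        rw [dist_comm]
        exact (isNextCenter_center hF he ω k (nonempty_inter_ball_center hF he ω k)).2.le
    _ = 3 / 2 * 2⁻¹ ^ k := by ring

lemma measurable_center [MeasurableSpace Ω]
    (hmeas : ∀ x r, MeasurableSet {ω | (F ω ∩ ball x r).Nonempty}) (k : ℕ) :
    Measurable fun ω => center hF he ω k := by
  classical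
  induction k with
  | zero =>
    exact measurable_find (fun ω => exists_nonempty_inter_ball he (hF ω) (by positivity))
      fun n => hmeas _ _
  | succ k ih =>
    have hnext : ∀ m, Measurable fun ω => Nat.find (exists_isNextCenter (F := F) he ω k m) :=
      fun m => measurable_find (fun ω => exists_isNextCenter he ω k m) fun n =>
        (measurableSet_setOfPred.1 (hmeas _ _)).imp
          ((measurableSet_setOfPred.1 (hmeas _ _)).and measurable_const) |>.setOf
    exact (measurable_from_prod_countable_left (f := fun p : Ω × ℕ =>
      Nat.find (exists_isNextCenter (F := F) he p.1 k p.2)) hnext).comp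
        (measurable_id.prodMk ih)

lemma mem_of_tendsto_center (hclosed : ∀ ω, IsClosed (F ω)) {ω : Ω} {x : X}
    (hx : Tendsto (fun k => e (center hF he ω k)) atTop (𝓝 x)) : x ∈ F ω := by
  choose z hzF hz using nonempty_inter_ball_center hF he ω
  have hdist : Tendsto (fun k => dist (e (center hF he ω k)) (z k)) atTop (𝓝 0) :=
    squeeze_zero (fun _ => dist_nonneg) (fun k => (mem_ball'.1 (hz k)).le)
      (tendsto_pow_atTop_nhds_zero_of_lt_one (by norm_num) (by norm_num))
  exact (hclosed ω).mem_of_tendsto (hx.congr_dist hdist) (Eventually.of_forall hzF)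

end MeasurableSelection

open MeasurableSelection in
theorem exists_measurable_selection {Ω X : Type*} [MeasurableSpace Ω] [MetricSpace X]
    [SeparableSpace X] [CompleteSpace X] [MeasurableSpace X] [BorelSpace X] {F : Ω → Set X}
    (hF : ∀ ω, (F ω).Nonempty) (hclosed : ∀ ω, IsClosed (F ω))
    (hmeas : ∀ x r, MeasurableSet {ω | (F ω ∩ ball x r).Nonempty}) :
    ∃ u : Ω → X, Measurable u ∧ ∀ ω, u ω ∈ F ω := by
  rcases isEmpty_or_nonempty Ω with hΩ | ⟨⟨ω₀⟩⟩
  · exact ⟨isEmptyElim, measurable_of_empty _, isEmptyElim⟩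
  have : Nonempty X := (hF ω₀).to_subtype.map Subtype.val
  obtain ⟨e, he⟩ := exists_dense_seq X
  choose u hu using fun ω => cauchySeq_tendsto_of_complete (cauchySeq_center hF he ω)
  refine ⟨u, ?_, fun ω => mem_of_tendsto_center hF he hclosed (hu ω)⟩
  exact measurable_of_tendsto_metrizable
    (fun k => measurable_from_nat.comp (measurable_center hF he hmeas k)) (tendsto_pi_nhds.2 hu)

section Caratheodory

variable {X E : Type*} [MetricSpace X] [ProperSpace X] [NormedAddCommGroup E]

lemma nonempty_preimage_zero_inter_ball_iff {f : X → E} (hf : Continuous f) {e : ℕ → X}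
    (he : DenseRange e) (x : X) (r : ℝ) :
    (f ⁻¹' {0} ∩ ball x r).Nonempty ↔
      ∃ s : ℚ, (s : ℝ) < r ∧
        ∀ k : ℕ, ∃ n, dist (e n) x ≤ s ∧ ‖f (e n)‖ < 1 / (k + 1) := by
  constructor
  · rintro ⟨u, hu0, hux⟩
    obtain ⟨s, hus, hsr⟩ := exists_rat_btwn (mem_ball.1 hux)
    refine ⟨s, hsr, fun k => ?_⟩
    have hopen : IsOpen (ball x s ∩ f ⁻¹' ball 0 (1 / (k + 1))) :=
      isOpen_ball.inter (isOpen_ball.preimage hf)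
    have hu : u ∈ ball x s ∩ f ⁻¹' ball 0 (1 / (k + 1)) :=
      ⟨hus, by
        rw [Set.mem_preimage, show f u = 0 from hu0]
        exact mem_ball_self (by positivity)⟩
    obtain ⟨n, hnx, hnf⟩ := he.exists_mem_open hopen ⟨u, hu⟩
    exact ⟨n, (mem_ball.1 hnx).le, mem_ball_zero_iff.1 hnf⟩
  · rintro ⟨s, hsr, h⟩
    have hclosure : (0 : E) ∈ closure (f '' closedBall x s) := by
      refine Metric.mem_closure_iff.2 fun ε hε => ?_
      obtain ⟨k, hk⟩ := exists_nat_one_div_lt hε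
      obtain ⟨n, hnx, hnf⟩ := h k
      exact ⟨f (e n), ⟨e n, hnx, rfl⟩, by rw [dist_zero_left]; exact hnf.trans hk⟩
    obtain ⟨u, hux, hu0⟩ :=
      ((isCompact_closedBall x s).image hf).isClosed.closure_subset hclosure
    exact ⟨u, hu0, (mem_closedBall.1 hux).trans_lt hsr⟩

lemma measurableSet_nonempty_preimage_zero_inter_ball {Ω : Type*} [MeasurableSpace Ω]
    [SeparableSpace X] [MeasurableSpace E] [OpensMeasurableSpace E] {ψ : Ω → X → E}
    (hmeas : ∀ u, Measurable fun ω => ψ ω u) (hcont : ∀ ω, Continuous (ψ ω))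
    (x : X) (r : ℝ) :
    MeasurableSet {ω | (ψ ω ⁻¹' {0} ∩ ball x r).Nonempty} := by
  have : Nonempty X := ⟨x⟩
  obtain ⟨e, he⟩ := exists_dense_seq X
  simp_rw [nonempty_preimage_zero_inter_ball_iff (hcont _) he]
  refine measurableSet_setOfPred.2 <| Measurable.exists fun s => measurable_const.and <|
    Measurable.forall fun k => Measurable.exists fun n => measurable_const.and ?_
  exact measurableSet_setOfPred.1 (measurableSet_lt (hmeas _).norm measurable_const)

end Caratheodory

/-- Measurable selection of zeros of Carathéodory maps. -/
theorem stmt_16 {Ω : Type*} [𝓕 : MeasurableSpace Ω] (M : ℕ)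
    (ψ : Ω → EuclideanSpace ℝ (Fin M) → EuclideanSpace ℝ (Fin M))
    (hmeas : ∀ u : EuclideanSpace ℝ (Fin M), Measurable fun ω => ψ ω u)
    (hcont : ∀ ω : Ω, Continuous (ψ ω))
    (hzero : ∀ ω : Ω, ∃ u : EuclideanSpace ℝ (Fin M), ψ ω u = 0) :
    ∃ u : Ω → EuclideanSpace ℝ (Fin M), Measurable u ∧ ∀ ω, ψ ω (u ω) = 0 :=
  exists_measurable_selection (F := fun ω => ψ ω ⁻¹' {0}) hzero
    (fun ω => isClosed_singleton.preimage (hcont ω))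
    (measurableSet_nonempty_preimage_zero_inter_ball hmeas hcont)
end

section
/- Minty's lemma for monotone operators: let U be a reflexive real Banach space and A: U → U′ a map that is monotone ((A(v) − A(u))(v − u) ≥ 0 for all u, v ∈ U), demicontinuous (if u_n → u in norm then A(u_n)(v) → A(u)(v) for every v ∈ U), and bounded (A maps norm-bounded subsets of U to norm-bounded subsets of U′). Suppose (u_n) ⊆ U and u ∈ U satisfy f(u_n) → f(u) for every f ∈ U′ (weak convergence u_n ⇀ u), suppose a ∈ U′ satisfies A(u_n)(v) → a(v) for every v ∈ U, and suppose limsup_{n→∞} A(u_n)(u_n) ≤ a(u). Then a = A(u). -/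
/-!
Monotonicity of `A` gives `A uₙ (uₙ) ≥ A uₙ v + A v (uₙ - v)`; passing to the limsup (the sequence
is bounded by the uniform boundedness principle, hence so is `A uₙ`) yields
`(a - A v) (u - v) ≥ 0` for every `v`. Minty's trick: taking `v = u - t w` with `t ↓ 0` and using
demicontinuity gives `(a - A u) w ≥ 0` for every `w`, hence `a = A u`.
-/

open Filter Topology

section WeaklyBounded

variable {𝕜 E : Type*} [RCLike 𝕜] [NormedAddCommGroup E] [NormedSpace 𝕜 E]

theorem exists_norm_le_of_forall_exists_norm_apply_le {ι : Type*} {x : ι → E}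
    (hx : ∀ f : StrongDual 𝕜 E, ∃ C, ∀ i, ‖f (x i)‖ ≤ C) :
    ∃ C, ∀ i, ‖x i‖ ≤ C := by
  obtain ⟨C, hC⟩ := banach_steinhaus (g := fun i => NormedSpace.inclusionInDoubleDual 𝕜 E (x i)) hx
  exact ⟨C, fun i => (NormedSpace.inclusionInDoubleDualLi 𝕜 (E := E)).norm_map (x i) ▸ hC i⟩

theorem isBounded_range_of_forall_tendsto_apply {x : ℕ → E} {u : E}
    (hx : ∀ f : StrongDual 𝕜 E, Tendsto (fun n => f (x n)) atTop (𝓝 (f u))) :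
    Bornology.IsBounded (Set.range x) :=
  isBounded_iff_forall_norm_le.2 <|
    (exists_norm_le_of_forall_exists_norm_apply_le fun f =>
      (hx f).norm.bddAbove_range.imp fun _ hC i => hC ⟨i, rfl⟩).imp
        fun _ hC => Set.forall_mem_range.2 hC

end WeaklyBounded

section Minty

variable {U : Type*} [NormedAddCommGroup U] [NormedSpace ℝ U]

theorem isBoundedUnder_le_apply_self {ι : Type*} (l : Filter ι) {φ : ι → StrongDual ℝ U}
    {x : ι → U} (hφ : Bornology.IsBounded (Set.range φ)) (hx : Bornology.IsBounded (Set.range x)) :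
    IsBoundedUnder (· ≤ ·) l fun i => φ i (x i) := by
  obtain ⟨M, hM⟩ := isBounded_iff_forall_norm_le.1 hφ
  obtain ⟨C, hC⟩ := isBounded_iff_forall_norm_le.1 hx
  refine isBoundedUnder_of ⟨M * C, fun i => ?_⟩
  calc φ i (x i) ≤ ‖φ i‖ * ‖x i‖ := (le_abs_self _).trans ((φ i).le_opNorm (x i))
    _ ≤ M * C := mul_le_mul (hM _ ⟨i, rfl⟩) (hC _ ⟨i, rfl⟩) (norm_nonneg _)
        ((norm_nonneg _).trans (hM _ ⟨i, rfl⟩))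

theorem minty_inequality {ι : Type*} {l : Filter ι} [l.NeBot] {A : U → StrongDual ℝ U}
    (hmono : ∀ u v : U, 0 ≤ (A v - A u) (v - u)) {x : ι → U} {u : U} {a : StrongDual ℝ U}
    (hx : ∀ f : StrongDual ℝ U, Tendsto (fun i => f (x i)) l (𝓝 (f u)))
    (hAx : ∀ v, Tendsto (fun i => A (x i) v) l (𝓝 (a v)))
    (hbdd : IsBoundedUnder (· ≤ ·) l fun i => A (x i) (x i))
    (hlimsup : limsup (fun i => A (x i) (x i)) l ≤ a u) (v : U) :
    0 ≤ (a - A v) (u - v) := by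
  have hle : ∀ i, A (x i) v + A v (x i) - A v v ≤ A (x i) (x i) := fun i => by
    have h := hmono v (x i)
    simp only [sub_apply, map_sub] at h
    linarith
  have hlim : Tendsto (fun i => A (x i) v + A v (x i) - A v v) l (𝓝 (a v + A v u - A v v)) :=
    ((hAx v).add (hx (A v))).sub tendsto_const_nhds
  have hlimit : a v + A v u - A v v ≤ a u := calc
    _ = limsup (fun i => A (x i) v + A v (x i) - A v v) l := hlim.limsup_eq.symm
    _ ≤ limsup (fun i => A (x i) (x i)) l :=
        limsup_le_limsup (.of_forall hle) hlim.isCoboundedUnder_le hbdd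
    _ ≤ a u := hlimsup
  simp only [sub_apply, map_sub]
  linarith

theorem ContinuousLinearMap.eq_zero_of_forall_nonneg {f : StrongDual ℝ U} (hf : ∀ w, 0 ≤ f w) :
    f = 0 :=
  ext fun w => le_antisymm (by simpa using hf (-w)) (hf w)

theorem eq_of_forall_nonneg_sub_apply_sub {A : U → StrongDual ℝ U} {u : U}
    (hdemi : ∀ xn : ℕ → U, Tendsto xn atTop (𝓝 u) →
      ∀ w, Tendsto (fun n => A (xn n) w) atTop (𝓝 (A u w)))
    {a : StrongDual ℝ U} (h : ∀ v, 0 ≤ (a - A v) (u - v)) :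
    a = A u := by
  refine sub_eq_zero.1 (ContinuousLinearMap.eq_zero_of_forall_nonneg fun w => ?_)
  set t : ℕ → ℝ := fun n => 1 / ((n : ℝ) + 1)
  have hv : Tendsto (fun n => u - t n • w) atTop (𝓝 u) := by
    simpa [t] using tendsto_const_nhds.sub
      ((tendsto_one_div_add_atTop_nhds_zero_nat (𝕜 := ℝ)).smul_const w)
  have hnonneg : ∀ n, 0 ≤ a w - A (u - t n • w) w := fun n => by
    have h := h (u - t n • w)
    simp only [sub_apply, sub_sub_cancel, map_smul, smul_eq_mul] at h
    exact nonneg_of_mul_nonneg_right (by linarith) (by positivity : 0 < t n)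
  simpa using ge_of_tendsto (tendsto_const_nhds.sub (hdemi _ hv w)) (.of_forall hnonneg)

end Minty

theorem stmt_17_general {U : Type*} [NormedAddCommGroup U] [NormedSpace ℝ U]
    (A : U → (U →L[ℝ] ℝ))
    (hmono : ∀ u v : U, 0 ≤ (A v - A u) (v - u))
    (hdemi : ∀ (un : ℕ → U) (u : U), Tendsto un atTop (𝓝 u) →
      ∀ v : U, Tendsto (fun n => A (un n) v) atTop (𝓝 (A u v)))
    (hbdd : ∀ s : Set U, Bornology.IsBounded s → Bornology.IsBounded (A '' s))
    (un : ℕ → U) (u : U)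
    (hweak : ∀ f : U →L[ℝ] ℝ, Tendsto (fun n => f (un n)) atTop (𝓝 (f u)))
    (a : U →L[ℝ] ℝ)
    (hAconv : ∀ v : U, Tendsto (fun n => A (un n) v) atTop (𝓝 (a v)))
    (hlimsup : limsup (fun n => A (un n) (un n)) atTop ≤ a u) :
    a = A u := by
  have hun : Bornology.IsBounded (Set.range un) := isBounded_range_of_forall_tendsto_apply hweak
  have hAun : Bornology.IsBounded (Set.range (A ∘ un)) := by
    simpa only [Set.range_comp] using hbdd _ hun
  exact eq_of_forall_nonneg_sub_apply_sub (hdemi · u) <|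
    minty_inequality hmono hweak hAconv (isBoundedUnder_le_apply_self atTop hAun hun) hlimsup

/-- Minty's lemma for monotone operators. -/
theorem stmt_17 {U : Type*} [NormedAddCommGroup U] [NormedSpace ℝ U] [CompleteSpace U]
    (hrefl : Function.Surjective (NormedSpace.inclusionInDoubleDual ℝ U))
    (A : U → (U →L[ℝ] ℝ))
    (hmono : ∀ u v : U, 0 ≤ (A v - A u) (v - u))
    (hdemi : ∀ (un : ℕ → U) (u : U), Tendsto un atTop (𝓝 u) →
      ∀ v : U, Tendsto (fun n => A (un n) v) atTop (𝓝 (A u v)))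
    (hbdd : ∀ s : Set U, Bornology.IsBounded s → Bornology.IsBounded (A '' s))
    (un : ℕ → U) (u : U)
    (hweak : ∀ f : U →L[ℝ] ℝ, Tendsto (fun n => f (un n)) atTop (𝓝 (f u)))
    (a : U →L[ℝ] ℝ)
    (hAconv : ∀ v : U, Tendsto (fun n => A (un n) v) atTop (𝓝 (a v)))
    (hlimsup : limsup (fun n => A (un n) (un n)) atTop ≤ a u) :
    a = A u :=
  stmt_17_general A hmono hdemi hbdd un u hweak a hAconv hlimsup
end
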